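/- arXiv:2103.06439 — 3 statements merged into one kernel-verified Lean document; each statement's English description precedes it below -/
import Mathlib

section
/- Let f be a concave function on a convex polytope P ⊂ ℝ^n, π ≥ 0 an integrable weight on P with ∫_P π > 0, and fix p ∈ P. Suppose f agrees on a neighborhood of p with the affine function y ↦ C₀ - ⟨Λ₀, y⟩. Then log(∫_P e^{-f(y)+f(p)} π(y) dy) ≥ log(∫_P e^{⟨Λ₀, y - p⟩} π(y) dy). (This is the key inequality H(𝓕) ≥ H(𝓕_{Λ₀}) showing the H-invariant minimizer among equivariant test configurations has linear associated function.) -/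
open MeasureTheory Set
open scoped RealInnerProductSpace

/-- Key inequality H(𝓕) ≥ H(𝓕_{Λ₀}): if a concave function f on a compact convex polytope P
agrees near p with y ↦ C₀ - ⟨Λ₀, y⟩, then
log ∫_P e^{-f(y)+f(p)} π dy ≥ log ∫_P e^{⟨Λ₀, y-p⟩} π dy. -/
theorem stmt3 {n : ℕ} (P : Set (EuclideanSpace ℝ (Fin n)))
    (hPc : IsCompact P) (hPconv : Convex ℝ P)
    (hPoly : ∃ s : Finset (EuclideanSpace ℝ (Fin n)), P = convexHull ℝ (s : Set (EuclideanSpace ℝ (Fin n))))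
    (π : EuclideanSpace ℝ (Fin n) → ℝ) (hπ0 : ∀ y, 0 ≤ π y)
    (hπint : IntegrableOn π P volume) (hπpos : 0 < ∫ y in P, π y)
    (f : EuclideanSpace ℝ (Fin n) → ℝ) (hf : ConcaveOn ℝ P f)
    (p : EuclideanSpace ℝ (Fin n)) (hp : p ∈ P)
    (C₀ : ℝ) (Λ₀ : EuclideanSpace ℝ (Fin n))
    (U : Set (EuclideanSpace ℝ (Fin n))) (hU : U ∈ nhdsWithin p P)
    (hfU : ∀ y ∈ U ∩ P, f y = C₀ - ⟪Λ₀, y⟫)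
    (hInt : IntegrableOn (fun y => Real.exp (-(f y) + f p) * π y) P volume) :
    Real.log (∫ y in P, Real.exp (⟪Λ₀, y - p⟫) * π y) ≤
      Real.log (∫ y in P, Real.exp (-(f y) + f p) * π y) := by
  have hpU : p ∈ U := mem_of_mem_nhdsWithin hp hU
  have hfp : f p = C₀ - ⟪Λ₀, p⟫ := hfU p ⟨hpU, hp⟩
  -- key pointwise bound from concavity
  have key : ∀ y ∈ P, f y ≤ C₀ - ⟪Λ₀, y⟫ := by
    intro y hy
    have hcont : Filter.Tendsto (fun t : ℝ => (1 - t) • p + t • y) (nhdsWithin 0 (Set.Ioi 0))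
        (nhdsWithin p P) := by
      rw [tendsto_nhdsWithin_iff]
      constructor
      · have : Filter.Tendsto (fun t : ℝ => (1 - t) • p + t • y) (nhds 0) (nhds p) := by
          have h1 : Continuous (fun t : ℝ => (1 - t) • p + t • y) := by continuity
          have := h1.tendsto 0
          simpa using this
        exact this.mono_left nhdsWithin_le_nhds
      · filter_upwards [Ioo_mem_nhdsGT_of_mem (Set.left_mem_Ico.2 one_pos)] with t ht
        exact hPconv hp hy (by linarith [ht.1, ht.2]) (le_of_lt ht.1) (by ring)
    have hev : ∀ᶠ t in nhdsWithin (0:ℝ) (Set.Ioi 0),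
        ((1 - t) • p + t • y ∈ U) ∧ t ∈ Set.Ioo (0:ℝ) 1 := by
      refine ((hcont.eventually_mem hU).and ?_)
      exact Ioo_mem_nhdsGT_of_mem (Set.left_mem_Ico.2 one_pos)
    obtain ⟨t, htU, ht0, ht1⟩ := hev.exists
    set z := (1 - t) • p + t • y with hz
    have hzP : z ∈ P := hPconv hp hy (by linarith) (le_of_lt ht0) (by ring)
    have hfz : f z = C₀ - ⟪Λ₀, z⟫ := hfU z ⟨htU, hzP⟩
    have hconc : (1 - t) * f p + t * f y ≤ f z :=
      hf.2 hp hy (by linarith) (le_of_lt ht0) (by ring)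
    have hinner : ⟪Λ₀, z⟫ = (1 - t) * ⟪Λ₀, p⟫ + t * ⟪Λ₀, y⟫ := by
      simp [hz, inner_add_right, inner_smul_right]
    rw [hfz, hinner, hfp] at hconc
    nlinarith [hconc, ht0]
  -- pointwise comparison of integrands
  have hpt : ∀ y ∈ P, Real.exp (⟪Λ₀, y - p⟫) * π y ≤ Real.exp (-(f y) + f p) * π y := by
    intro y hy
    have h1 : ⟪Λ₀, y - p⟫ ≤ -(f y) + f p := by
      rw [inner_sub_right, hfp]
      have := key y hy
      linarith
    exact mul_le_mul_of_nonneg_right (Real.exp_le_exp.2 h1) (hπ0 y)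
  -- integrability of the smaller function
  have hg_meas : AEStronglyMeasurable (fun y => Real.exp (⟪Λ₀, y - p⟫) * π y)
      (volume.restrict P) := by
    have hc : Continuous (fun y : EuclideanSpace ℝ (Fin n) => Real.exp (⟪Λ₀, y - p⟫)) := by
      exact Real.continuous_exp.comp ((continuous_const.inner (continuous_id.sub continuous_const)))
    exact hc.aestronglyMeasurable.mul hπint.aestronglyMeasurable
  have hg_int : IntegrableOn (fun y => Real.exp (⟪Λ₀, y - p⟫) * π y) P volume := by
    refine Integrable.mono hInt hg_meas ?_
    refine (ae_restrict_iff' hPc.measurableSet).2 (Filter.Eventually.of_forall fun y hy => ?_)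
    rw [Real.norm_eq_abs, Real.norm_eq_abs,
      abs_of_nonneg (mul_nonneg (Real.exp_pos _).le (hπ0 y)),
      abs_of_nonneg (mul_nonneg (Real.exp_pos _).le (hπ0 y))]
    exact hpt y hy
  -- positivity of the left integral
  have hAle : (∫ y in P, Real.exp (⟪Λ₀, y - p⟫) * π y) ≤
      ∫ y in P, Real.exp (-(f y) + f p) * π y :=
    setIntegral_mono_on hg_int hInt hPc.measurableSet hpt
  have hApos : 0 < ∫ y in P, Real.exp (⟪Λ₀, y - p⟫) * π y := by
    obtain ⟨y₀, hy₀, hmin'⟩ := hPc.exists_isMinOn ⟨p, hp⟩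
      ((continuous_const.inner (continuous_id.sub continuous_const)).continuousOn :
        ContinuousOn (fun y : EuclideanSpace ℝ (Fin n) => ⟪Λ₀, y - p⟫) P)
    have hmin : ∀ y ∈ P, ⟪Λ₀, y₀ - p⟫ ≤ ⟪Λ₀, y - p⟫ := hmin'
    have hlow : ∀ y ∈ P, Real.exp (⟪Λ₀, y₀ - p⟫) * π y ≤ Real.exp (⟪Λ₀, y - p⟫) * π y :=
      fun y hy => mul_le_mul_of_nonneg_right (Real.exp_le_exp.2 (hmin y hy)) (hπ0 y)
    have hconst_int : IntegrableOn (fun y => Real.exp (⟪Λ₀, y₀ - p⟫) * π y) P volume :=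
      hπint.const_mul _
    have := setIntegral_mono_on hconst_int hg_int hPc.measurableSet hlow
    calc (0:ℝ) < Real.exp (⟪Λ₀, y₀ - p⟫) * ∫ y in P, π y := by positivity
      _ = ∫ y in P, Real.exp (⟪Λ₀, y₀ - p⟫) * π y := (integral_const_mul _ _).symm
      _ ≤ _ := this
  exact Real.log_le_log hApos hAle
end

section
/- Let P_+ = {(x,y) ∈ ℝ² : y ≥ -x, x ≥ y, x ≤ 2, y ≥ -2, x - y ≤ 3} and π(x,y) = (x-y)²(x+y)². Then the barycenter b = (∫_{P_+} v π dv)/(∫_{P_+} π dv) does not lie in the closed cone 2ρ + Ξ̄, where 2ρ = (2,0) and Ξ̄ = {(x,y) : x ≥ |y|} is the cone spanned by α₁=(1,-1) and α₂=(1,1). Equivalently, b₁ - 2 < |b₂|. -/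
/-!
On `P₊` the linear form `2 - x` is nonnegative, and it is positive, together with `π`, on the
open triangle `|y| < x < 3/2`. Hence `∫_{P₊} π (2 - x) > 0`, which forces the first coordinate
of the `π`-weighted barycenter to be `< 2`, whereas every point of `2ρ + Ξ̄` has first
coordinate `≥ 2`.
-/

open MeasureTheory Set

noncomputable section

section Barycenter

variable {E : Type*} [NormedAddCommGroup E] [NormedSpace ℝ E] [MeasurableSpace E]

def weightedBarycenter (μ : Measure E) (w : E → ℝ) : E :=
  (∫ v, w v ∂μ)⁻¹ • ∫ v, w v • v ∂μ

theorem apply_weightedBarycenter_lt [CompleteSpace E] {μ : Measure E} {w : E → ℝ}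
    (ℓ : E →L[ℝ] ℝ) {c : ℝ} (hw : 0 ≤ᵐ[μ] w) (hwi : Integrable w μ)
    (hwvi : Integrable (fun v ↦ w v • v) μ) (hpos : 0 < ∫ v, w v * (c - ℓ v) ∂μ) :
    ℓ (weightedBarycenter μ w) < c := by
  have hsplit : ∫ v, w v * (c - ℓ v) ∂μ = c * ∫ v, w v ∂μ - ℓ (∫ v, w v • v ∂μ) := by
    rw [← integral_const_mul, ← ℓ.integral_comp_comm hwvi,
      ← integral_sub (hwi.const_mul c) (ℓ.integrable_comp hwvi)]
    congr 1 with v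
    simp only [map_smul, smul_eq_mul]
    ring
  have hmass : 0 < ∫ v, w v ∂μ := by
    refine (integral_nonneg_of_ae hw).lt_of_ne fun h ↦ hpos.ne' ?_
    have hw0 : w =ᵐ[μ] 0 := (integral_eq_zero_iff_of_nonneg_ae hw hwi).1 h.symm
    exact integral_eq_zero_of_ae (hw0.mono fun v hv ↦ by simp [hv])
  rw [weightedBarycenter, map_smul, smul_eq_mul, inv_mul_lt_iff₀ hmass]
  linarith

end Barycenter

local notation "ℝ²" => EuclideanSpace ℝ (Fin 2)

def polytopePlus : Set ℝ² :=
  {v | -(v 0) ≤ v 1 ∧ v 1 ≤ v 0 ∧ v 0 ≤ 2 ∧ -2 ≤ v 1 ∧ v 0 - v 1 ≤ 3}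

def dhDensity (v : ℝ²) : ℝ := (v 0 - v 1) ^ 2 * (v 0 + v 1) ^ 2

@[fun_prop]
lemma continuous_dhDensity : Continuous dhDensity := by
  unfold dhDensity
  fun_prop

lemma dhDensity_nonneg (v : ℝ²) : 0 ≤ dhDensity v := by
  unfold dhDensity
  positivity

lemma isCompact_polytopePlus : IsCompact polytopePlus := by
  have hclosed : IsClosed polytopePlus := by
    simp only [polytopePlus, ofPred_and]
    apply_rules [IsClosed.inter, isClosed_le] <;> fun_prop
  refine (isCompact_closedBall (0 : ℝ²) 3).of_isClosed_subset hclosed fun v hv ↦ ?_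
  obtain ⟨h1, h2, h3, h4, h5⟩ := hv
  rw [mem_closedBall_zero_iff, EuclideanSpace.norm_eq, Real.sqrt_le_iff, Fin.sum_univ_two]
  simp only [Real.norm_eq_abs, sq_abs]
  constructor <;> nlinarith

lemma Continuous.integrableOn_polytopePlus {F : Type*} [NormedAddCommGroup F] {f : ℝ² → F}
    (hf : Continuous f) : IntegrableOn f polytopePlus :=
  hf.continuousOn.integrableOn_compact isCompact_polytopePlus

lemma setIntegral_dhDensity_mul_sub_pos :
    0 < ∫ v in polytopePlus, dhDensity v * (2 - v 0) := by
  set f : ℝ² → ℝ := fun v ↦ dhDensity v * (2 - v 0)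
  have hf_nonneg : 0 ≤ᵐ[volume.restrict polytopePlus] f :=
    ae_restrict_of_forall_mem isCompact_polytopePlus.isClosed.measurableSet fun v hv ↦
      mul_nonneg (dhDensity_nonneg v) (sub_nonneg.2 hv.2.2.1)
  rw [setIntegral_pos_iff_support_of_nonneg_ae hf_nonneg
    (Continuous.integrableOn_polytopePlus (by fun_prop))]
  set U : Set ℝ² := {v | -(v 0) < v 1 ∧ v 1 < v 0 ∧ v 0 < 3 / 2}
  have hU_open : IsOpen U := by
    simp only [U, ofPred_and]
    apply_rules [IsOpen.inter, isOpen_lt] <;> fun_prop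
  have hU_sub : U ⊆ Function.support f ∩ polytopePlus := by
    rintro v ⟨h1, h2, h3⟩
    have hf_pos : 0 < f v := by
      have : 0 < v 0 - v 1 := by linarith
      have : 0 < v 0 + v 1 := by linarith
      have : 0 < 2 - v 0 := by linarith
      simp only [f, dhDensity]
      positivity
    exact ⟨hf_pos.ne', by linarith, h2.le, by linarith, by linarith, by linarith⟩
  have hU_nonempty : !₂[1, 0] ∈ U := by
    norm_num [U]
  exact (hU_open.measure_pos volume ⟨_, hU_nonempty⟩).trans_le (measure_mono hU_sub)

end

/-- For the first K-unstable Fano SO₄(ℂ)-compactification, the π-weighted barycenter of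
its moment polytope P₊ does not lie in the closed cone 2ρ + Ξ̄, i.e. b₁ - 2 < |b₂|. -/
theorem stmt9 (P : Set (EuclideanSpace ℝ (Fin 2)))
    (hP : P = {v : EuclideanSpace ℝ (Fin 2) |
      -(v 0) ≤ v 1 ∧ v 1 ≤ v 0 ∧ v 0 ≤ 2 ∧ -2 ≤ v 1 ∧ v 0 - v 1 ≤ 3})
    (π : EuclideanSpace ℝ (Fin 2) → ℝ)
    (hπ : ∀ v, π v = (v 0 - v 1) ^ 2 * (v 0 + v 1) ^ 2)
    (b : EuclideanSpace ℝ (Fin 2))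
    (hb : b = (∫ v in P, π v)⁻¹ • ∫ v in P, π v • v) :
    b 0 - 2 < |b 1| := by
  obtain rfl : π = dhDensity := funext hπ
  obtain rfl : P = polytopePlus := hP
  have hb0 : b 0 < 2 := by
    rw [hb]
    exact apply_weightedBarycenter_lt (EuclideanSpace.proj 0) (ae_of_all _ dhDensity_nonneg)
      (Continuous.integrableOn_polytopePlus (by fun_prop))
      (Continuous.integrableOn_polytopePlus (by fun_prop))
      setIntegral_dhDensity_mul_sub_pos
  linarith [abs_nonneg (b 1)]
end

section
/- For the polytope P_+ = {(x,y) : y ≥ -x, x ≥ y, x ≤ 2, y ≥ -2, x-y ≤ 3, 2x - y ≤ 5} ⊂ ℝ² with weight π(x,y) = (x-y)²(x+y)² and 2ρ = (2,0), the barycenter b = (∫_{P_+} v π dv)/(∫_{P_+} π dv) satisfies b ∉ 2ρ + cone{(1,-1),(1,1)}̄, i.e. b₁ - 2 < |b₂|, so b does not lie in the closed cone 2ρ + Ξ̄ = {(x,y): x-2 ≥ |y|}. -/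
open MeasureTheory Set

lemma coord_dist_le (v p : EuclideanSpace ℝ (Fin 2)) (i : Fin 2) :
    |v i - p i| ≤ dist v p := by
  rw [EuclideanSpace.dist_eq]
  rw [show |v i - p i| = Real.sqrt (dist (v i) (p i) ^ 2) by
    rw [Real.sqrt_sq_eq_abs, Real.dist_eq, abs_abs]]
  apply Real.sqrt_le_sqrt
  exact Finset.single_le_sum (f := fun j => dist (v j) (p j) ^ 2)
    (fun j _ => sq_nonneg _) (Finset.mem_univ i)

lemma set_integral_pos_of_ball {S : Set (EuclideanSpace ℝ (Fin 2))}
    {g : EuclideanSpace ℝ (Fin 2) → ℝ} (hSm : MeasurableSet S)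
    (hint : IntegrableOn g S)
    (hg0 : ∀ v ∈ S, 0 ≤ g v) (p : EuclideanSpace ℝ (Fin 2)) {r c : ℝ}
    (hr : 0 < r) (hc : 0 < c) (hBS : Metric.closedBall p r ⊆ S)
    (hgB : ∀ v ∈ Metric.closedBall p r, c ≤ g v) :
    0 < ∫ v in S, g v := by
  have hBm : MeasurableSet (Metric.closedBall p r) := measurableSet_closedBall
  have hμB : volume (Metric.closedBall p r) ≠ ⊤ :=
    (isCompact_closedBall p r).measure_ne_top
  have hintB : IntegrableOn g (Metric.closedBall p r) := hint.mono_set hBS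
  have h1 : c * (volume (Metric.closedBall p r)).toReal ≤
      ∫ v in Metric.closedBall p r, g v :=
    setIntegral_ge_of_const_le_real hBm hμB hgB hintB
  have h2 : (∫ v in Metric.closedBall p r, g v) ≤ ∫ v in S, g v := by
    apply setIntegral_mono_set hint
    · filter_upwards [ae_restrict_mem hSm] with v hv using hg0 v hv
    · exact HasSubset.Subset.eventuallyLE hBS
  have hvol : 0 < (volume (Metric.closedBall p r)).toReal :=
    ENNReal.toReal_pos (ne_of_gt (Metric.measure_closedBall_pos volume p hr)) hμB
  nlinarith

/-- For the second K-unstable Fano SO₄(ℂ)-compactification (extra facet 2x - y ≤ 5), the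
π-weighted barycenter of its moment polytope does not lie in the closed cone
2ρ + Ξ̄ = {(x,y) : x - 2 ≥ |y|}, i.e. b₁ - 2 < |b₂|. -/
theorem stmt16 (P : Set (EuclideanSpace ℝ (Fin 2)))
    (hP : P = {v : EuclideanSpace ℝ (Fin 2) |
      -(v 0) ≤ v 1 ∧ v 1 ≤ v 0 ∧ v 0 ≤ 2 ∧ -2 ≤ v 1 ∧ v 0 - v 1 ≤ 3 ∧
        2 * v 0 - v 1 ≤ 5})
    (π : EuclideanSpace ℝ (Fin 2) → ℝ)
    (hπ : ∀ v, π v = (v 0 - v 1) ^ 2 * (v 0 + v 1) ^ 2)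
    (b : EuclideanSpace ℝ (Fin 2))
    (hb : b = (∫ v in P, π v)⁻¹ • ∫ v in P, π v • v) :
    b 0 - 2 < |b 1| := by
  have hπ' : π = fun v => (v 0 - v 1) ^ 2 * (v 0 + v 1) ^ 2 := funext hπ
  subst hπ' hP hb
  set S : Set (EuclideanSpace ℝ (Fin 2)) := {v : EuclideanSpace ℝ (Fin 2) |
      -(v 0) ≤ v 1 ∧ v 1 ≤ v 0 ∧ v 0 ≤ 2 ∧ -2 ≤ v 1 ∧ v 0 - v 1 ≤ 3 ∧
        2 * v 0 - v 1 ≤ 5} with hS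
  set f : EuclideanSpace ℝ (Fin 2) → ℝ :=
    fun v => (v 0 - v 1) ^ 2 * (v 0 + v 1) ^ 2 with hf
  have c0 : Continuous (fun v : EuclideanSpace ℝ (Fin 2) => v 0) :=
    (EuclideanSpace.proj (𝕜 := ℝ) (0 : Fin 2)).continuous
  have c1 : Continuous (fun v : EuclideanSpace ℝ (Fin 2) => v 1) :=
    (EuclideanSpace.proj (𝕜 := ℝ) (1 : Fin 2)).continuous
  have hcl : IsClosed S := by
    rw [hS]
    simp only [setOf_and]
    exact (isClosed_le c0.neg c1).inter ((isClosed_le c1 c0).inter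
      ((isClosed_le c0 continuous_const).inter ((isClosed_le continuous_const c1).inter
      ((isClosed_le (c0.sub c1) continuous_const).inter
        (isClosed_le ((continuous_const.mul c0).sub c1) continuous_const)))))
  have hSm : MeasurableSet S := hcl.measurableSet
  have hbdd : S ⊆ Metric.closedBall 0 8 := by
    intro v hv
    obtain ⟨h1, h2, h3, h4, h5, h6⟩ := hv
    have hv0 : |v 0| ≤ 2 := by rw [abs_le]; constructor <;> linarith
    have hv1 : |v 1| ≤ 2 := by rw [abs_le]; constructor <;> linarith
    simp only [Metric.mem_closedBall]
    rw [EuclideanSpace.dist_eq]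
    have : ∑ i : Fin 2, dist (v i) ((0 : EuclideanSpace ℝ (Fin 2)) i) ^ 2 ≤ 64 := by
      rw [Fin.sum_univ_two]
      have e0 : dist (v 0) ((0 : EuclideanSpace ℝ (Fin 2)) 0) = |v 0| := by
        simp [Real.dist_eq]
      have e1 : dist (v 1) ((0 : EuclideanSpace ℝ (Fin 2)) 1) = |v 1| := by
        simp [Real.dist_eq]
      rw [e0, e1]
      nlinarith [abs_nonneg (v 0), abs_nonneg (v 1)]
    calc Real.sqrt (∑ i : Fin 2, dist (v i) ((0 : EuclideanSpace ℝ (Fin 2)) i) ^ 2)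
        ≤ Real.sqrt 64 := Real.sqrt_le_sqrt this
      _ = 8 := by rw [show (64 : ℝ) = 8 ^ 2 by norm_num, Real.sqrt_sq (by norm_num)]
  have hK : IsCompact S :=
    Metric.isCompact_of_isClosed_isBounded hcl (Metric.isBounded_closedBall.subset hbdd)
  have contf : Continuous f := ((c0.sub c1).pow 2).mul ((c0.add c1).pow 2)
  have hintf : IntegrableOn f S := contf.continuousOn.integrableOn_compact hK
  have hintv : IntegrableOn (fun v => f v • v) S :=
    (contf.smul continuous_id).continuousOn.integrableOn_compact hK
  have hintx : IntegrableOn (fun v => f v * v 0) S :=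
    (contf.mul c0).continuousOn.integrableOn_compact hK
  -- the ball
  set p : EuclideanSpace ℝ (Fin 2) := (WithLp.equiv 2 (Fin 2 → ℝ)).symm ![1, -(1/2)] with hp
  have hp0 : p 0 = 1 := rfl
  have hp1 : p 1 = -(1/2) := rfl
  have hball : ∀ v ∈ Metric.closedBall p (1/10),
      9/10 ≤ v 0 ∧ v 0 ≤ 11/10 ∧ -(6/10) ≤ v 1 ∧ v 1 ≤ -(4/10) := by
    intro v hv
    rw [Metric.mem_closedBall] at hv
    have h0 := (coord_dist_le v p 0).trans hv
    have h1 := (coord_dist_le v p 1).trans hv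
    rw [hp0, abs_le] at h0
    rw [hp1, abs_le] at h1
    refine ⟨by linarith [h0.1], by linarith [h0.2], by linarith [h1.1], by linarith [h1.2]⟩
  have hBS : Metric.closedBall p (1/10) ⊆ S := by
    intro v hv
    obtain ⟨ha, hb, hc, hd⟩ := hball v hv
    exact ⟨by linarith, by linarith, by linarith, by linarith, by linarith, by linarith⟩
  have hf_lb : ∀ v ∈ Metric.closedBall p (1/10), (1/10 : ℝ) ≤ f v := by
    intro v hv
    obtain ⟨ha, hb, hc, hd⟩ := hball v hv
    have h1 : (13/10 : ℝ) ≤ v 0 - v 1 := by linarith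
    have h2 : (3/10 : ℝ) ≤ v 0 + v 1 := by linarith
    simp only [hf]
    have q1 : (169/100 : ℝ) ≤ (v 0 - v 1) ^ 2 := by nlinarith
    have q2 : (9/100 : ℝ) ≤ (v 0 + v 1) ^ 2 := by nlinarith
    nlinarith [q1, q2]
  have hf_nonneg : ∀ v ∈ S, 0 ≤ f v := fun v _ =>
    mul_nonneg (sq_nonneg _) (sq_nonneg _)
  have hIpos : 0 < ∫ v in S, f v :=
    set_integral_pos_of_ball hSm hintf hf_nonneg p (by norm_num) (by norm_num) hBS hf_lb
  -- second positivity: ∫ (2 - x) f > 0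
  have hint2 : IntegrableOn (fun v => (2 - v 0) * f v) S :=
    ((continuous_const.sub c0).mul contf).continuousOn.integrableOn_compact hK
  have hpos2 : 0 < ∫ v in S, (2 - v 0) * f v := by
    apply set_integral_pos_of_ball hSm hint2 (fun v hv => mul_nonneg (by linarith [hv.2.2.1])
      (hf_nonneg v hv)) p (by norm_num) (show (0:ℝ) < 1/100 by norm_num) hBS
    intro v hv
    obtain ⟨ha, hb, hc, hd⟩ := hball v hv
    have := hf_lb v hv
    nlinarith
  -- relate
  have hsplit : (∫ v in S, (2 - v 0) * f v)
      = 2 * (∫ v in S, f v) - ∫ v in S, f v * v 0 := by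
    have he : (fun v : EuclideanSpace ℝ (Fin 2) => (2 - v 0) * f v)
        = fun v => 2 * f v - f v * v 0 := funext fun v => by ring
    rw [he, integral_sub (hintf.const_mul 2) hintx, integral_const_mul]
  have hF0 : (∫ v in S, f v • v) 0 = ∫ v in S, f v * v 0 := by
    have key := (EuclideanSpace.proj (𝕜 := ℝ) (0 : Fin 2)).integral_comp_comm hintv
    calc (∫ v in S, f v • v) 0
        = (EuclideanSpace.proj (𝕜 := ℝ) (0 : Fin 2)) (∫ v in S, f v • v) := rfl
      _ = ∫ v in S, (EuclideanSpace.proj (𝕜 := ℝ) (0 : Fin 2)) (f v • v) := key.symm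
      _ = ∫ v in S, f v * v 0 := rfl
  have hb0 : ((∫ v in S, f v)⁻¹ • ∫ v in S, f v • v) 0
      = (∫ v in S, f v)⁻¹ * ∫ v in S, f v * v 0 := by
    rw [← hF0]; rfl
  have hlt : ((∫ v in S, f v)⁻¹ • ∫ v in S, f v • v) 0 < 2 := by
    rw [hb0, inv_mul_eq_div, div_lt_iff₀ hIpos]
    linarith
  have habs : (0 : ℝ) ≤ |((∫ v in S, f v)⁻¹ • ∫ v in S, f v • v) 1| := abs_nonneg _
  linarith
end
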